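/- arXiv:0912.5119 — 2 statements merged into one kernel-verified Lean document; each statement's English description precedes it below -/
import Mathlib

section
/- Let r ≥ 1 be an integer, h an integer with h > r, n ≥ 0 an integer, q real with 0 < q < 1, x a real number, and f an odd positive integer. Define E_{n,q}^{(h,r)}(x) = 2^r Σ_{(m_1,…,m_r)∈ℕ^r} q^{(h-1)m_1 + ⋯ + (h-r)m_r} (-1)^{m_1+⋯+m_r} [x + m_1+⋯+m_r]_q^n (an absolutely convergent series). Then the distribution relation E_{n,q}^{(h,r)}(x) = [f]_q^n Σ_{(a_1,…,a_r)∈{0,…,f-1}^r} (-1)^{a_1+⋯+a_r} q^{(h-1)a_1+⋯+(h-r)a_r} E_{n,q^f}^{(h,r)}((x + a_1 + ⋯ + a_r)/f) holds. -/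
/-! Writing `m_j = f m'_j + a_j` with `0 ≤ a_j < f` splits the series defining
`E_{n,q}^{(h,r)}(x)` into `f^r` subseries. On each of them the exponent
`(h-1)m_1+⋯+(h-r)m_r` is additive,
`[x + Σ m]_q = [f]_q [(x + Σ a)/f + Σ m']_{q^f}`, and `(-1)^{f Σ m'} = (-1)^{Σ m'}` since `f` is odd,
so the subseries indexed by `a` is a multiple of `E_{n,q^f}^{(h,r)}((x + Σ a)/f)`. The
rearrangement is justified by absolute convergence: for `h > r` that exponent dominates `Σ m`, and
`[y]_q` is bounded for `y ≥ x`. -/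

open Finset

/-- The `q`-analogue `[y]_q = (1 - q^y)/(1 - q)` (real power). -/
noncomputable def qnum (q y : ℝ) : ℝ := (1 - q ^ y) / (1 - q)

/-- The higher-order `q`-Euler polynomial
`E_{n,q}^{(h,r)}(x) = 2^r Σ_{(m_1,…,m_r)∈ℕ^r} q^{(h-1)m_1+⋯+(h-r)m_r} (-1)^{m_1+⋯+m_r}
[x+m_1+⋯+m_r]_q^n`. -/
noncomputable def qEulerHR (n : ℕ) (h : ℤ) (r : ℕ) (q x : ℝ) : ℝ :=
  (2 : ℝ) ^ r * ∑' m : Fin r → ℕ,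
    q ^ (∑ j : Fin r, (h - 1 - (j : ℤ)) * (m j : ℤ)) * (-1 : ℝ) ^ (∑ j, m j) *
      qnum q (x + (↑(∑ j, m j) : ℝ)) ^ n

def eulerWeight {r : ℕ} (h : ℤ) (m : Fin r → ℕ) : ℤ := ∑ j : Fin r, (h - 1 - (j : ℤ)) * (m j : ℤ)

noncomputable def qEulerTerm (n : ℕ) (h : ℤ) (r : ℕ) (q x : ℝ) (m : Fin r → ℕ) : ℝ :=
  q ^ eulerWeight h m * (-1 : ℝ) ^ (∑ j, m j) * qnum q (x + (↑(∑ j, m j) : ℝ)) ^ n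

lemma summable_pow_sum (r : ℕ) {q : ℝ} (hq0 : 0 ≤ q) (hq1 : q < 1) :
    Summable (fun m : Fin r → ℕ => q ^ ∑ j, m j) := by
  induction r with
  | zero => exact Summable.of_finite
  | succ r ih =>
    have hprod : Summable (fun p : ℕ × (Fin r → ℕ) => q ^ p.1 * q ^ ∑ j, p.2 j) :=
      Summable.mul_of_nonneg (f := fun k : ℕ => q ^ k) (g := fun m : Fin r → ℕ => q ^ ∑ j, m j)
        (summable_geometric_of_lt_one hq0 hq1) ih
        (fun _ => pow_nonneg hq0 _) (fun _ => pow_nonneg hq0 _)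
    refine (Fin.consEquiv fun _ : Fin (r + 1) => ℕ).summable_iff.mp (hprod.congr fun p => ?_)
    simp [Fin.sum_univ_succ, pow_add]

lemma sum_le_eulerWeight {r : ℕ} {h : ℤ} (hh : (r : ℤ) < h) (m : Fin r → ℕ) :
    ((∑ j, m j : ℕ) : ℤ) ≤ eulerWeight h m := by
  push_cast
  refine Finset.sum_le_sum fun j _ => ?_
  have : (1 : ℤ) ≤ h - 1 - j := by have := j.isLt; omega
  nlinarith [Int.natCast_nonneg (m j)]

lemma abs_qnum_add_le {q : ℝ} (hq0 : 0 < q) (hq1 : q < 1) (x : ℝ) {t : ℝ} (ht : 0 ≤ t) :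
    |qnum q (x + t)| ≤ (1 + q ^ x) / (1 - q) := by
  have hpos : 0 < q ^ (x + t) := Real.rpow_pos_of_pos hq0 _
  have hle : q ^ (x + t) ≤ q ^ x :=
    Real.rpow_le_rpow_of_exponent_ge hq0 hq1.le (by linarith)
  rw [qnum, abs_div, abs_of_pos (sub_pos.mpr hq1)]
  gcongr
  rw [abs_le]
  constructor <;> linarith

lemma summable_abs_qEulerTerm (n : ℕ) {h : ℤ} {r : ℕ} (hh : (r : ℤ) < h) {q : ℝ}
    (hq0 : 0 < q) (hq1 : q < 1) (x : ℝ) :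
    Summable (fun m => |qEulerTerm n h r q x m|) := by
  refine Summable.of_nonneg_of_le (fun m => abs_nonneg _) (fun m => ?_)
    ((summable_pow_sum r hq0.le hq1).mul_right (((1 + q ^ x) / (1 - q)) ^ n))
  have hweight : q ^ eulerWeight h m ≤ q ^ ∑ j, m j := by
    rw [← zpow_natCast]
    exact zpow_le_zpow_right_of_le_one₀ hq0 hq1.le (sum_le_eulerWeight hh m)
  rw [qEulerTerm, abs_mul, abs_mul, abs_pow, abs_neg, abs_one, one_pow, mul_one, abs_pow,
    abs_of_pos (zpow_pos hq0 _)]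
  gcongr
  exact abs_qnum_add_le hq0 hq1 x (Nat.cast_nonneg _)

lemma qnum_eq_mul_qnum_pow {q : ℝ} (hq0 : 0 < q) (hq1 : q ≠ 1) {f : ℕ} (hf : f ≠ 0) (y : ℝ) :
    qnum q y = qnum q f * qnum (q ^ f) (y / f) := by
  have hqf : q ^ f ≠ 1 := by
    rwa [Ne, pow_eq_one_iff_of_nonneg hq0.le hf]
  have hpow : (q ^ f) ^ (y / f) = q ^ y := by
    rw [← Real.rpow_natCast, ← Real.rpow_mul hq0.le, mul_div_cancel₀ _ (Nat.cast_ne_zero.mpr hf)]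
  rw [qnum, qnum, qnum, hpow, Real.rpow_natCast]
  field_simp [sub_ne_zero.mpr hq1.symm, sub_ne_zero.mpr hqf.symm]

lemma eulerWeight_mul_add {r : ℕ} (h : ℤ) (f : ℕ) (m a : Fin r → ℕ) :
    eulerWeight h (fun j => m j * f + a j) = f * eulerWeight h m + eulerWeight h a := by
  simp only [eulerWeight, Finset.mul_sum, ← Finset.sum_add_distrib]
  refine Finset.sum_congr rfl fun j _ => ?_
  push_cast
  ring

lemma qEulerTerm_mul_add (n : ℕ) (h : ℤ) (r : ℕ) {q : ℝ} (hq0 : 0 < q) (hq1 : q ≠ 1) {f : ℕ}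
    (hf : 0 < f) (hfodd : Odd f) (x : ℝ) (a m : Fin r → ℕ) :
    qEulerTerm n h r q x (fun j => m j * f + a j) =
      (-1) ^ (∑ j, a j) * q ^ eulerWeight h a * qnum q f ^ n *
        qEulerTerm n h r (q ^ f) ((x + (↑(∑ j, a j) : ℝ)) / f) m := by
  have hsum : ∑ j, (m j * f + a j) = (∑ j, m j) * f + ∑ j, a j := by
    rw [Finset.sum_add_distrib, Finset.sum_mul]
  have hqnum : qnum q (x + (↑((∑ j, m j) * f + ∑ j, a j) : ℝ)) =
      qnum q f * qnum (q ^ f) ((x + (↑(∑ j, a j) : ℝ)) / f + (↑(∑ j, m j) : ℝ)) := by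
    rw [qnum_eq_mul_qnum_pow hq0 hq1 hf.ne']
    congr 2
    field_simp
    push_cast
    ring
  rw [qEulerTerm, qEulerTerm, eulerWeight_mul_add, hsum, hqnum, zpow_add₀ hq0.ne', zpow_mul,
    zpow_natCast, pow_add, pow_mul', hfodd.neg_one_pow, mul_pow]
  ring

lemma tsum_eq_sum_tsum_mul_add {ι α : Type*} [Fintype ι] [DecidableEq ι] [AddCommGroup α]
    [UniformSpace α] [IsUniformAddGroup α] [CompleteSpace α] [T2Space α] (f : ℕ) [NeZero f]
    {T : (ι → ℕ) → α} (hT : Summable T) :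
    ∑' m, T m = ∑ a : ι → Fin f, ∑' m : ι → ℕ, T (fun j => m j * f + a j) := by
  let e : (ι → Fin f) × (ι → ℕ) ≃ (ι → ℕ) :=
    ((Equiv.prodComm _ _).trans (Equiv.arrowProdEquivProdArrow ι _ _).symm).trans
      (Equiv.piCongrRight fun _ => (Nat.divModEquiv f).symm)
  have hTe : Summable fun p => T (e p) := e.summable_iff.mpr hT
  rw [← e.tsum_eq, hTe.tsum_prod, tsum_fintype]
  rfl

theorem stmt_5_general (r : ℕ) (h : ℤ) (hh : (r : ℤ) < h) (n : ℕ)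
    (q : ℝ) (hq0 : 0 < q) (hq1 : q < 1) (x : ℝ) (f : ℕ) (hf : 0 < f) (hfodd : Odd f) :
    Summable (fun m : Fin r → ℕ =>
      |q ^ (∑ j : Fin r, (h - 1 - (j : ℤ)) * (m j : ℤ)) * (-1 : ℝ) ^ (∑ j, m j) *
        qnum q (x + (↑(∑ j, m j) : ℝ)) ^ n|) ∧
    (∀ a : Fin r → Fin f,
      Summable (fun m : Fin r → ℕ =>
        |(q ^ f) ^ (∑ j : Fin r, (h - 1 - (j : ℤ)) * (m j : ℤ)) * (-1 : ℝ) ^ (∑ j, m j) *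
          qnum (q ^ f) ((x + (↑(∑ j, (a j : ℕ)) : ℝ)) / f + (↑(∑ j, m j) : ℝ)) ^ n|)) ∧
    qEulerHR n h r q x =
      qnum q f ^ n *
        ∑ a : Fin r → Fin f,
          (-1 : ℝ) ^ (∑ j, (a j : ℕ)) * q ^ (∑ j : Fin r, (h - 1 - (j : ℤ)) * ((a j : ℕ) : ℤ)) *
            qEulerHR n h r (q ^ f) ((x + (↑(∑ j, (a j : ℕ)) : ℝ)) / f) := by
  have hqf0 : 0 < q ^ f := pow_pos hq0 f
  have hqf1 : q ^ f < 1 := pow_lt_one₀ hq0.le hq1 hf.ne'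
  refine ⟨summable_abs_qEulerTerm n hh hq0 hq1 x,
    fun a => summable_abs_qEulerTerm n hh hqf0 hqf1 _, ?_⟩
  have : NeZero f := ⟨hf.ne'⟩
  change 2 ^ r * ∑' m, qEulerTerm n h r q x m = qnum q f ^ n * ∑ a : Fin r → Fin f,
    (-1 : ℝ) ^ (∑ j, (a j : ℕ)) * q ^ eulerWeight h (fun j => (a j : ℕ)) *
      (2 ^ r * ∑' m, qEulerTerm n h r (q ^ f) ((x + (↑(∑ j, (a j : ℕ)) : ℝ)) / f) m)
  rw [tsum_eq_sum_tsum_mul_add f (summable_abs_qEulerTerm n hh hq0 hq1 x).of_abs]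
  simp only [qEulerTerm_mul_add n h r hq0 hq1.ne hf hfodd, tsum_mul_left, Finset.mul_sum]
  refine Finset.sum_congr rfl fun a _ => ?_
  ring

theorem stmt_5 (r : ℕ) (hr : 1 ≤ r) (h : ℤ) (hh : (r : ℤ) < h) (n : ℕ)
    (q : ℝ) (hq0 : 0 < q) (hq1 : q < 1) (x : ℝ) (f : ℕ) (hf : 0 < f) (hfodd : Odd f) :
    Summable (fun m : Fin r → ℕ =>
      |q ^ (∑ j : Fin r, (h - 1 - (j : ℤ)) * (m j : ℤ)) * (-1 : ℝ) ^ (∑ j, m j) *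
        qnum q (x + (↑(∑ j, m j) : ℝ)) ^ n|) ∧
    (∀ a : Fin r → Fin f,
      Summable (fun m : Fin r → ℕ =>
        |(q ^ f) ^ (∑ j : Fin r, (h - 1 - (j : ℤ)) * (m j : ℤ)) * (-1 : ℝ) ^ (∑ j, m j) *
          qnum (q ^ f) ((x + (↑(∑ j, (a j : ℕ)) : ℝ)) / f + (↑(∑ j, m j) : ℝ)) ^ n|)) ∧
    qEulerHR n h r q x =
      qnum q f ^ n *
        ∑ a : Fin r → Fin f,
          (-1 : ℝ) ^ (∑ j, (a j : ℕ)) * q ^ (∑ j : Fin r, (h - 1 - (j : ℤ)) * ((a j : ℕ) : ℤ)) *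
            qEulerHR n h r (q ^ f) ((x + (↑(∑ j, (a j : ℕ)) : ℝ)) / f) :=
  stmt_5_general r h hh n q hq0 hq1 x f hf hfodd
end

section
/- Let f be an odd positive integer, χ a Dirichlet character modulo f, r ≥ 1 an integer, q real with 0 < q < 1, x, w_1, …, w_r positive real numbers, and a_1, …, a_r positive real numbers. Then for every complex number s with Re(s) > 0, (1/Γ(s)) ∫_0^∞ t^{s-1} ( 2^r Σ_{(m_1,…,m_r)∈ℕ^r} (∏_{j=1}^r χ(m_j)) (-1)^{m_1+⋯+m_r} q^{a_1 m_1 + ⋯ + a_r m_r} e^{-[x + w_1 m_1 + ⋯ + w_r m_r]_q · t} ) dt = 2^r Σ_{(m_1,…,m_r)∈ℕ^r} (∏_{j=1}^r χ(m_j)) (-1)^{m_1+⋯+m_r} q^{a_1 m_1 + ⋯ + a_r m_r} [x + w_1 m_1 + ⋯ + w_r m_r]_q^{-s}, both series converging absolutely and the integral converging. -/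
/-!
Since `[·]_q` is increasing, every `[x + ∑ wᵢ mᵢ]_q` is at least `[x]_q > 0`, and the coefficients
are bounded by `q ^ (∑ aᵢ mᵢ) = ∏ (q ^ aᵢ) ^ mᵢ`, a product of convergent geometric series. So the
series of exponentials converges absolutely, uniformly on `t ≥ 0`, and decays like
`exp (-[x]_q t)`; its Mellin transform exists and may be taken term by term, each term
contributing `Γ(s) [x + ∑ wᵢ mᵢ]_q ^ (-s)`.
-/

open Finset MeasureTheory

open Set Complex

theorem summable_pi_prod_of_nonneg {ι : Type*} [Fintype ι] {β : ι → Type*} {f : ∀ i, β i → ℝ}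
    (hf0 : ∀ i b, 0 ≤ f i b) (hf : ∀ i, Summable (f i)) :
    Summable fun m : (∀ i, β i) => ∏ i, f i (m i) := by
  classical
  refine summable_of_sum_le (c := ∏ i, ∑' b, f i b)
    (fun m => prod_nonneg fun i _ => hf0 i _) fun u => ?_
  calc ∑ m ∈ u, ∏ i, f i (m i)
      ≤ ∑ m ∈ Fintype.piFinset fun i => u.image (· i), ∏ i, f i (m i) :=
        sum_le_sum_of_subset_of_nonneg
          (fun m hm => Fintype.mem_piFinset.2 fun i => mem_image_of_mem _ hm)
          fun m _ _ => prod_nonneg fun i _ => hf0 i _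
    _ = ∏ i, ∑ b ∈ u.image (· i), f i b := (prod_univ_sum _ _).symm
    _ ≤ ∏ i, ∑' b, f i b :=
        prod_le_prod (fun i _ => sum_nonneg fun b _ => hf0 i b)
          fun i _ => (hf i).sum_le_tsum _ fun b _ => hf0 i b

theorem summable_rpow_sum_mul {ι : Type*} [Fintype ι] {q : ℝ} (hq0 : 0 < q) (hq1 : q < 1)
    {a : ι → ℝ} (ha : ∀ i, 0 < a i) :
    Summable fun m : ι → ℕ => q ^ (∑ i, a i * m i) := by
  have hgeom : ∀ i, Summable fun k : ℕ => (q ^ a i) ^ k := fun i =>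
    summable_geometric_of_lt_one (Real.rpow_nonneg hq0.le _) (Real.rpow_lt_one hq0.le hq1 (ha i))
  refine (summable_pi_prod_of_nonneg (f := fun i k => (q ^ a i) ^ k)
    (fun i k => pow_nonneg (Real.rpow_nonneg hq0.le _) k) hgeom).congr fun m => ?_
  rw [Real.rpow_sum_of_pos hq0]
  exact prod_congr rfl fun i _ => by rw [Real.rpow_mul hq0.le, Real.rpow_natCast]

theorem norm_prod_mul_neg_one_pow_mul_ofReal_le {ι : Type*} [Fintype ι] {N : ℕ}
    (χ : DirichletCharacter ℂ N) (m : ι → ℕ) (n : ℕ) {y : ℝ} (hy : 0 ≤ y) :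
    ‖(∏ j, χ (m j : ZMod N)) * (-1 : ℂ) ^ n * (y : ℂ)‖ ≤ y := by
  rw [norm_mul, norm_mul, norm_pow, norm_neg, norm_one, one_pow, mul_one, norm_real,
    Real.norm_of_nonneg hy, norm_prod]
  exact mul_le_of_le_one_left hy <|
    prod_le_one (fun j _ => norm_nonneg _) fun j _ => χ.norm_le_one _

theorem qnum_pos {q : ℝ} (hq0 : 0 < q) (hq1 : q < 1) {y : ℝ} (hy : 0 < y) : 0 < qnum q y :=
  div_pos (by linarith [Real.rpow_lt_one hq0.le hq1 hy]) (by linarith)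

theorem qnum_mono {q : ℝ} (hq0 : 0 < q) (hq1 : q < 1) : Monotone (qnum q) := fun _ _ hyz =>
  div_le_div_of_nonneg_right (by linarith [Real.rpow_le_rpow_of_exponent_ge hq0 hq1.le hyz])
    (by linarith)

theorem norm_mul_cexp_neg_mul_le {z : ℂ} {P K t : ℝ} (hKP : K ≤ P) (ht : 0 ≤ t) :
    ‖z * cexp (-(P : ℂ) * t)‖ ≤ ‖z‖ * Real.exp (-(K * t)) := by
  rw [norm_mul, Complex.norm_exp]
  gcongr
  simpa using mul_le_mul_of_nonneg_right hKP ht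

section ExpSeries

variable {ι : Type*} {a : ι → ℂ} {p : ι → ℝ} {K : ℝ}

theorem summable_norm_mul_cexp_neg (ha : Summable (‖a ·‖)) (hp : ∀ i, K ≤ p i) {t : ℝ}
    (ht : 0 ≤ t) : Summable fun i => ‖a i * cexp (-(p i : ℂ) * t)‖ :=
  (ha.mul_right _).of_nonneg_of_le (fun _ => norm_nonneg _) fun i =>
    norm_mul_cexp_neg_mul_le (hp i) ht

theorem norm_tsum_mul_cexp_neg_le (ha : Summable (‖a ·‖)) (hp : ∀ i, K ≤ p i) {t : ℝ}
    (ht : 0 ≤ t) :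
    ‖∑' i, a i * cexp (-(p i : ℂ) * t)‖ ≤ (∑' i, ‖a i‖) * Real.exp (-(K * t)) := by
  rw [← tsum_mul_right]
  exact (norm_tsum_le_tsum_norm (summable_norm_mul_cexp_neg ha hp ht)).trans <|
    (summable_norm_mul_cexp_neg ha hp ht).tsum_le_tsum
      (fun i => norm_mul_cexp_neg_mul_le (hp i) ht) (ha.mul_right _)

theorem continuousOn_tsum_mul_cexp_neg (ha : Summable (‖a ·‖)) (hK : 0 ≤ K)
    (hp : ∀ i, K ≤ p i) : ContinuousOn (fun t : ℝ => ∑' i, a i * cexp (-(p i : ℂ) * t)) (Ici 0) :=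
  continuousOn_tsum (fun i => by fun_prop) ha fun i t ht => by
    simpa using norm_mul_cexp_neg_mul_le (hK.trans (hp i)) (mem_Ici.1 ht)

theorem summable_norm_mul_cpow_neg (ha : Summable (‖a ·‖)) (hK : 0 < K) (hp : ∀ i, K ≤ p i)
    {s : ℂ} (hs : 0 ≤ s.re) : Summable fun i => ‖a i * (p i : ℂ) ^ (-s)‖ := by
  refine (ha.mul_right (K ^ (-s.re))).of_nonneg_of_le (fun _ => norm_nonneg _) fun i => ?_
  rw [norm_mul, norm_cpow_eq_rpow_re_of_pos (hK.trans_le (hp i)), neg_re]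
  exact mul_le_mul_of_nonneg_left
    (Real.rpow_le_rpow_of_nonpos hK (hp i) (neg_nonpos.2 hs)) (norm_nonneg _)

theorem mellinConvergent_tsum_mul_cexp_neg [Countable ι] (ha : Summable (‖a ·‖)) (hK : 0 < K)
    (hp : ∀ i, K ≤ p i) {s : ℂ} (hs : 0 < s.re) :
    MellinConvergent (fun t : ℝ => ∑' i, a i * cexp (-(p i : ℂ) * t)) s := by
  have hbound : ∀ t : ℝ, 0 ≤ t →
      ‖∑' i, a i * cexp (-(p i : ℂ) * t)‖ ≤ (∑' i, ‖a i‖) * Real.exp (-(K * t)) :=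
    fun t => norm_tsum_mul_cexp_neg_le ha hp
  refine mellinConvergent_of_isBigO_rpow_exp (b := 0) hK
    (((continuousOn_tsum_mul_cexp_neg ha hK.le hp).mono Ioi_subset_Ici_self).locallyIntegrableOn
      measurableSet_Ioi) ?_ ?_ hs
  · refine Asymptotics.IsBigO.of_bound (∑' i, ‖a i‖) ?_
    filter_upwards [Filter.eventually_ge_atTop 0] with t ht
    simpa [Real.norm_of_nonneg (Real.exp_pos _).le] using hbound t ht
  · refine Asymptotics.IsBigO.of_bound (∑' i, ‖a i‖) ?_
    filter_upwards [self_mem_nhdsWithin] with t (ht : 0 < t)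
    have hexp : Real.exp (-(K * t)) ≤ 1 := Real.exp_le_one_iff.2 (by nlinarith)
    simpa using (hbound t ht.le).trans
      (mul_le_of_le_one_right (tsum_nonneg fun _ => norm_nonneg _) hexp)

theorem mellin_tsum_mul_cexp_neg [Countable ι] (ha : Summable (‖a ·‖)) (hK : 0 < K)
    (hp : ∀ i, K ≤ p i) {s : ℂ} (hs : 0 < s.re) :
    mellin (fun t : ℝ => ∑' i, a i * cexp (-(p i : ℂ) * t)) s =
      Gamma s * ∑' i, a i * (p i : ℂ) ^ (-s) := by
  have hp0 : ∀ i, 0 < p i := fun i => hK.trans_le (hp i)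
  have hterm : ∀ i t, a i * ((Real.exp (-p i * t) : ℝ) : ℂ) = a i * cexp (-(p i : ℂ) * t) :=
    fun i t => by push_cast; rfl
  have hF : ∀ t ∈ Ioi (0 : ℝ), HasSum (fun i => a i * ((Real.exp (-p i * t) : ℝ) : ℂ))
      (∑' i, a i * cexp (-(p i : ℂ) * t)) := fun t ht => by
    simpa only [hterm] using (summable_norm_mul_cexp_neg ha hp (le_of_lt ht)).of_norm.hasSum
  have hsum : Summable fun i => ‖a i‖ / p i ^ s.re := by
    refine (summable_norm_mul_cpow_neg ha hK hp hs.le).congr fun i => ?_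
    rw [norm_mul, norm_cpow_eq_rpow_re_of_pos (hp0 i), neg_re, Real.rpow_neg (hp0 i).le,
      div_eq_mul_inv]
  rw [← (hasSum_mellin (fun i => Or.inr (hp0 i)) hs hF hsum).tsum_eq, ← tsum_mul_left]
  exact tsum_congr fun i => by rw [cpow_neg, div_eq_mul_inv, mul_assoc]

end ExpSeries

theorem stmt_12_general (f : ℕ) (χ : DirichletCharacter ℂ f)
    (r : ℕ) (q : ℝ) (hq0 : 0 < q) (hq1 : q < 1)
    (x : ℝ) (hx : 0 < x) (w a : Fin r → ℝ) (hw : ∀ i, 0 < w i) (ha : ∀ i, 0 < a i)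
    (s : ℂ) (hs : 0 < s.re) :
    (∀ t : ℝ, 0 < t →
      Summable (fun m : Fin r → ℕ =>
        ‖(∏ j, χ ((m j : ℕ) : ZMod f)) * (-1 : ℂ) ^ (∑ i, m i) *
          ((q ^ (∑ i, a i * m i) : ℝ) : ℂ) *
            Complex.exp (-(((qnum q (x + ∑ i, w i * m i) : ℝ) : ℂ)) * t)‖)) ∧
    Summable (fun m : Fin r → ℕ =>
      ‖(∏ j, χ ((m j : ℕ) : ZMod f)) * (-1 : ℂ) ^ (∑ i, m i) *
        ((q ^ (∑ i, a i * m i) : ℝ) : ℂ) *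
          ((qnum q (x + ∑ i, w i * m i) : ℝ) : ℂ) ^ (-s)‖) ∧
    IntegrableOn (fun t : ℝ => (t : ℂ) ^ (s - 1) *
      ((2 : ℂ) ^ r * ∑' m : Fin r → ℕ,
        (∏ j, χ ((m j : ℕ) : ZMod f)) * (-1 : ℂ) ^ (∑ i, m i) *
          ((q ^ (∑ i, a i * m i) : ℝ) : ℂ) *
            Complex.exp (-(((qnum q (x + ∑ i, w i * m i) : ℝ) : ℂ)) * t))) (Set.Ioi 0) ∧
    (1 / Complex.Gamma s) * ∫ t in Set.Ioi (0 : ℝ), (t : ℂ) ^ (s - 1) *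
        ((2 : ℂ) ^ r * ∑' m : Fin r → ℕ,
          (∏ j, χ ((m j : ℕ) : ZMod f)) * (-1 : ℂ) ^ (∑ i, m i) *
            ((q ^ (∑ i, a i * m i) : ℝ) : ℂ) *
              Complex.exp (-(((qnum q (x + ∑ i, w i * m i) : ℝ) : ℂ)) * t)) =
      (2 : ℂ) ^ r * ∑' m : Fin r → ℕ,
        (∏ j, χ ((m j : ℕ) : ZMod f)) * (-1 : ℂ) ^ (∑ i, m i) *
          ((q ^ (∑ i, a i * m i) : ℝ) : ℂ) *
            ((qnum q (x + ∑ i, w i * m i) : ℝ) : ℂ) ^ (-s) := by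
  have hcoeff : Summable fun m : Fin r → ℕ =>
      ‖(∏ j, χ ((m j : ℕ) : ZMod f)) * (-1 : ℂ) ^ (∑ i, m i) *
        ((q ^ (∑ i, a i * m i) : ℝ) : ℂ)‖ :=
    (summable_rpow_sum_mul hq0 hq1 ha).of_nonneg_of_le (fun _ => norm_nonneg _) fun m =>
      norm_prod_mul_neg_one_pow_mul_ofReal_le χ m _ (Real.rpow_nonneg hq0.le _)
  have hK : 0 < qnum q x := qnum_pos hq0 hq1 hx
  have hp : ∀ m : Fin r → ℕ, qnum q x ≤ qnum q (x + ∑ i, w i * m i) := fun m =>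
    qnum_mono hq0 hq1 <| le_add_of_nonneg_right <|
      sum_nonneg fun i _ => mul_nonneg (hw i).le (Nat.cast_nonneg _)
  refine ⟨fun t ht => summable_norm_mul_cexp_neg hcoeff hp ht.le,
    summable_norm_mul_cpow_neg hcoeff hK hp hs.le,
    (mellinConvergent_tsum_mul_cexp_neg hcoeff hK hp hs).const_smul ((2 : ℂ) ^ r), ?_⟩
  change 1 / Gamma s * mellin (fun t => (2 : ℂ) ^ r • _) s = _
  rw [mellin_const_smul, mellin_tsum_mul_cexp_neg hcoeff hK hp hs, smul_eq_mul]
  field_simp [Gamma_ne_zero_of_re_pos hs]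

theorem stmt_12 (f : ℕ) (hf : 0 < f) (hfodd : Odd f) (χ : DirichletCharacter ℂ f)
    (r : ℕ) (hr : 1 ≤ r) (q : ℝ) (hq0 : 0 < q) (hq1 : q < 1)
    (x : ℝ) (hx : 0 < x) (w a : Fin r → ℝ) (hw : ∀ i, 0 < w i) (ha : ∀ i, 0 < a i)
    (s : ℂ) (hs : 0 < s.re) :
    (∀ t : ℝ, 0 < t →
      Summable (fun m : Fin r → ℕ =>
        ‖(∏ j, χ ((m j : ℕ) : ZMod f)) * (-1 : ℂ) ^ (∑ i, m i) *
          ((q ^ (∑ i, a i * m i) : ℝ) : ℂ) *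
            Complex.exp (-(((qnum q (x + ∑ i, w i * m i) : ℝ) : ℂ)) * t)‖)) ∧
    Summable (fun m : Fin r → ℕ =>
      ‖(∏ j, χ ((m j : ℕ) : ZMod f)) * (-1 : ℂ) ^ (∑ i, m i) *
        ((q ^ (∑ i, a i * m i) : ℝ) : ℂ) *
          ((qnum q (x + ∑ i, w i * m i) : ℝ) : ℂ) ^ (-s)‖) ∧
    IntegrableOn (fun t : ℝ => (t : ℂ) ^ (s - 1) *
      ((2 : ℂ) ^ r * ∑' m : Fin r → ℕ,
        (∏ j, χ ((m j : ℕ) : ZMod f)) * (-1 : ℂ) ^ (∑ i, m i) *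
          ((q ^ (∑ i, a i * m i) : ℝ) : ℂ) *
            Complex.exp (-(((qnum q (x + ∑ i, w i * m i) : ℝ) : ℂ)) * t))) (Set.Ioi 0) ∧
    (1 / Complex.Gamma s) * ∫ t in Set.Ioi (0 : ℝ), (t : ℂ) ^ (s - 1) *
        ((2 : ℂ) ^ r * ∑' m : Fin r → ℕ,
          (∏ j, χ ((m j : ℕ) : ZMod f)) * (-1 : ℂ) ^ (∑ i, m i) *
            ((q ^ (∑ i, a i * m i) : ℝ) : ℂ) *
              Complex.exp (-(((qnum q (x + ∑ i, w i * m i) : ℝ) : ℂ)) * t)) =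
      (2 : ℂ) ^ r * ∑' m : Fin r → ℕ,
        (∏ j, χ ((m j : ℕ) : ZMod f)) * (-1 : ℂ) ^ (∑ i, m i) *
          ((q ^ (∑ i, a i * m i) : ℝ) : ℂ) *
            ((qnum q (x + ∑ i, w i * m i) : ℝ) : ℂ) ^ (-s) :=
  stmt_12_general f χ r q hq0 hq1 x hx w a hw ha s hs
end
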